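/- Let V be a real vector space with inner products a and s and let π be the s-orthogonal projection onto a finite-dimensional subspace V_aux. Suppose D > 0 is such that for every v_aux ∈ V_aux there is q ∈ V with π(q) = v_aux and a(q,q) ≤ D s(v_aux, v_aux). If η ∈ V satisfies a(η, v) + s(π η, π v) = s(v_aux, π v) for all v ∈ V for some fixed v_aux ∈ V_aux, then s(v_aux, v_aux) ≤ (1 + D)^{1/2} (a(η,η) + s(π η, π η))^{1/2} s(v_aux, v_aux)^{1/2}, and hence s(v_aux, v_aux) ≤ (1 + D)(a(η,η) + s(π η, π η)). -/

import Mathlib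

/-!
Write `B(u, v) = a(u, v) + s(π u, π v)`, a positive semidefinite symmetric form. Testing the
variational identity against a lift `q` of `v_aux` gives `B(η, q) = s(v_aux, v_aux)`, while
`B(q, q) = a(q, q) + s(v_aux, v_aux) ≤ (1 + D) s(v_aux, v_aux)`. Cauchy–Schwarz for `B` then yields
`s(v_aux, v_aux)² ≤ (1 + D) B(η, η) s(v_aux, v_aux)`, from which both bounds follow.
-/

namespace LinearMap

variable {R M : Type*} [CommRing R] [LinearOrder R] [AddCommGroup M] [Module R M]

lemma isPosSemidef_of_symm_of_pos {B : M →ₗ[R] M →ₗ[R] R} (hsymm : ∀ u v, B u v = B v u)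
    (hpos : ∀ v, v ≠ 0 → 0 < B v v) : B.IsPosSemidef where
  isSymm := isSymm_def.2 hsymm
  isNonneg := isNonneg_def.2 fun v ↦ by
    rcases eq_or_ne v 0 with rfl | hv
    · simp
    · exact (hpos v hv).le

lemma IsPosSemidef.compl₁₂_self {M' : Type*} [AddCommGroup M'] [Module R M']
    {B : M →ₗ[R] M →ₗ[R] R} (hB : B.IsPosSemidef) (f : M' →ₗ[R] M) :
    (B.compl₁₂ f f).IsPosSemidef where
  isSymm := isSymm_def.2 fun u v ↦ hB.isSymm.eq (f u) (f v)
  isNonneg := isNonneg_def.2 fun v ↦ hB.isNonneg.nonneg (f v)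

lemma IsPosSemidef.sq_le_mul_mul_of_apply_eq [IsStrictOrderedRing R] {B : M →ₗ[R] M →ₗ[R] R}
    (hB : B.IsPosSemidef) {η q : M} {x K : R} (hηq : B η q = x) (hq : B q q ≤ K * x) :
    x ^ 2 ≤ K * B η η * x :=
  calc x ^ 2 ≤ B η η * B q q :=
        hηq ▸ BilinForm.apply_sq_le_of_symm B hB.isNonneg.nonneg hB.isSymm η q
    _ ≤ B η η * (K * x) := mul_le_mul_of_nonneg_left hq (hB.isNonneg.nonneg η)
    _ = K * B η η * x := by ring

end LinearMap

namespace Real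

lemma le_sqrt_mul_sqrt_mul_sqrt_self {x c d : ℝ} (hx : 0 ≤ x) (hc : 0 ≤ c) (hd : 0 ≤ d)
    (h : x ^ 2 ≤ c * d * x) : x ≤ √c * √d * √x := by
  rw [← sqrt_mul hc, ← sqrt_mul (mul_nonneg hc hd)]
  exact (le_sqrt hx (by positivity)).2 h

lemma le_of_sq_le_mul_self {x c : ℝ} (hc : 0 ≤ c) (h : x ^ 2 ≤ c * x) : x ≤ c := by
  nlinarith

end Real

theorem stmt13_general {V : Type*} [AddCommGroup V] [Module ℝ V]
    (a s : LinearMap.BilinForm ℝ V)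
    (ha_symm : ∀ u v, a u v = a v u) (ha_pos : ∀ v, v ≠ 0 → 0 < a v v)
    (hs_symm : ∀ u v, s u v = s v u) (hs_pos : ∀ v, v ≠ 0 → 0 < s v v)
    (Vaux : Submodule ℝ V)
    (π : V →ₗ[ℝ] V)
    (D : ℝ) (hD : 0 < D)
    (hsurj : ∀ vaux ∈ Vaux, ∃ q : V, π q = vaux ∧ a q q ≤ D * s vaux vaux)
    (η vaux : V) (hvaux : vaux ∈ Vaux)
    (hvar : ∀ v, a η v + s (π η) (π v) = s vaux (π v)) :
    s vaux vaux ≤ Real.sqrt (1 + D) * Real.sqrt (a η η + s (π η) (π η)) *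
      Real.sqrt (s vaux vaux) ∧
    s vaux vaux ≤ (1 + D) * (a η η + s (π η) (π η)) := by
  set B : V →ₗ[ℝ] V →ₗ[ℝ] ℝ := a + s.compl₁₂ π π
  have hs := LinearMap.isPosSemidef_of_symm_of_pos hs_symm hs_pos
  have hB : LinearMap.IsPosSemidef B :=
    (LinearMap.isPosSemidef_of_symm_of_pos ha_symm ha_pos).add (hs.compl₁₂_self π)
  obtain ⟨q, hq, hqa⟩ := hsurj vaux hvaux
  have hBηq : B η q = s vaux vaux := by simpa [B, hq] using hvar q
  have hBqq : B q q ≤ (1 + D) * s vaux vaux := by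
    simp only [B, LinearMap.add_apply, LinearMap.compl₁₂_apply, hq]
    linarith
  have hsq := hB.sq_le_mul_mul_of_apply_eq hBηq hBqq
  have hs_vaux : 0 ≤ s vaux vaux := hs.isNonneg.nonneg vaux
  have hBηη : 0 ≤ B η η := hB.isNonneg.nonneg η
  have h1D : 0 ≤ 1 + D := by linarith
  exact ⟨Real.le_sqrt_mul_sqrt_mul_sqrt_self hs_vaux h1D hBηη hsq,
    Real.le_of_sq_le_mul_self (mul_nonneg h1D hBηη) hsq⟩

/-- abstract coefficient estimate from Step 2 of the convergence proof. -/
theorem stmt13 {V : Type*} [AddCommGroup V] [Module ℝ V]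
    (a s : LinearMap.BilinForm ℝ V)
    (ha_symm : ∀ u v, a u v = a v u) (ha_pos : ∀ v, v ≠ 0 → 0 < a v v)
    (hs_symm : ∀ u v, s u v = s v u) (hs_pos : ∀ v, v ≠ 0 → 0 < s v v)
    (Vaux : Submodule ℝ V) [FiniteDimensional ℝ Vaux]
    (π : V →ₗ[ℝ] V)
    (hπ_range : ∀ v, π v ∈ Vaux)
    (hπ_id : ∀ v ∈ Vaux, π v = v)
    (hπ_selfadj : ∀ u v, s (π u) v = s u (π v))
    (D : ℝ) (hD : 0 < D)
    (hsurj : ∀ vaux ∈ Vaux, ∃ q : V, π q = vaux ∧ a q q ≤ D * s vaux vaux)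
    (η vaux : V) (hvaux : vaux ∈ Vaux)
    (hvar : ∀ v, a η v + s (π η) (π v) = s vaux (π v)) :
    s vaux vaux ≤ Real.sqrt (1 + D) * Real.sqrt (a η η + s (π η) (π η)) *
      Real.sqrt (s vaux vaux) ∧
    s vaux vaux ≤ (1 + D) * (a η η + s (π η) (π η)) :=
  stmt13_general a s ha_symm ha_pos hs_symm hs_pos Vaux π D hD hsurj η vaux hvaux hvar
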